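/- arXiv:1412.4242 — 4 statements merged into one kernel-verified Lean document; each statement's English description precedes it below -/
import Mathlib

section
/- Let μ be a finite nonzero Borel measure on a metric space X with finite s-energy I_s(μ) < ∞. Then there exists a Borel set B ⊂ X with μ(B) > 0 and a constant C > 0 such that the restricted measure ν = μ|_B satisfies ν(B(x,r)) ≤ C·r^s for all x ∈ X and r > 0. -/
open MeasureTheory Metric

theorem stmt_3 {X : Type*} [MetricSpace X] [TopologicalSpace.SeparableSpace X]
    [MeasurableSpace X] [BorelSpace X] {s : ℝ} (hs : 0 < s)
    (μ : Measure X) (hμ0 : μ ≠ 0) [IsFiniteMeasure μ]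
    (hE : ∫⁻ x₁, ∫⁻ x₂, (edist x₁ x₂) ^ (-s) ∂μ ∂μ < ⊤) :
    ∃ B : Set X, MeasurableSet B ∧ 0 < μ B ∧
      ∃ C : ℝ, 0 < C ∧ ∀ (x : X) (r : ℝ), 0 < r →
        μ.restrict B (closedBall x r) ≤ ENNReal.ofReal (C * r ^ s) := by
  set f : X → ENNReal := fun x => ∫⁻ y, edist x y ^ (-s) ∂μ with hf
  haveI : SecondCountableTopology X := UniformSpace.secondCountable_of_separable X
  have hfm : Measurable f := by
    apply Measurable.lintegral_prod_right
    exact (measurable_edist).pow_const (-s)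
  -- f < ∞ a.e.
  have hae : ∀ᵐ x ∂μ, f x < ⊤ := ae_lt_top hfm hE.ne
  -- find n with μ {f ≤ n} > 0
  have hpos : ∃ n : ℕ, 0 < μ {x | f x ≤ (n : ENNReal)} := by
    by_contra h
    push_neg at h
    simp only [nonpos_iff_eq_zero] at h
    have hcup : μ (⋃ n : ℕ, {x | f x ≤ (n : ENNReal)}) = 0 :=
      measure_iUnion_null h
    have : μ {x | f x < ⊤} = 0 := by
      refine measure_mono_null ?_ hcup
      intro x hx
      obtain ⟨n, hn⟩ := ENNReal.exists_nat_gt hx.ne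
      exact Set.mem_iUnion.2 ⟨n, hn.le⟩
    have h2 : μ {x | ¬ f x < ⊤} = 0 := ae_iff.1 hae
    have huniv : μ Set.univ = 0 := by
      have hsub : Set.univ ⊆ {x | f x < ⊤} ∪ {x | ¬ f x < ⊤} := by
        intro x _; by_cases hx : f x < ⊤ <;> [exact Or.inl hx; exact Or.inr hx]
      exact measure_mono_null hsub (measure_union_null ‹μ {x | f x < ⊤} = 0› h2)
    exact hμ0 (by simpa [Measure.measure_univ_eq_zero] using huniv)
  obtain ⟨n, hn⟩ := hpos
  set B : Set X := {x | f x ≤ (n : ENNReal)} with hB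
  have hBm : MeasurableSet B := hfm measurableSet_Iic
  refine ⟨B, hBm, hn, (n + 1) * 2 ^ s, by positivity, ?_⟩
  intro x r hr
  by_cases hne : (B ∩ closedBall x r).Nonempty
  · obtain ⟨z, hzB, hzr⟩ := hne
    -- for y in closedBall x r, edist z y ≤ 2r
    have key : μ (closedBall x r) * (ENNReal.ofReal (2 * r)) ^ (-s) ≤ (n : ENNReal) := by
      calc μ (closedBall x r) * (ENNReal.ofReal (2 * r)) ^ (-s)
          = ∫⁻ _ in closedBall x r, (ENNReal.ofReal (2 * r)) ^ (-s) ∂μ := by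
            rw [setLIntegral_const, mul_comm]
        _ ≤ ∫⁻ y in closedBall x r, edist z y ^ (-s) ∂μ := by
            refine setLIntegral_mono' measurableSet_closedBall fun y hy => ?_
            have hd : edist z y ≤ ENNReal.ofReal (2 * r) := by
              have : dist z y ≤ 2 * r := by
                have := dist_triangle z x y
                have h1 : dist z x ≤ r := by
                  simpa [dist_comm] using mem_closedBall.1 hzr
                have h2 : dist x y ≤ r := by
                  simpa [dist_comm] using mem_closedBall.1 hy
                linarith
              calc edist z y = ENNReal.ofReal (dist z y) := (edist_dist z y)
                _ ≤ ENNReal.ofReal (2 * r) := ENNReal.ofReal_le_ofReal this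
            rw [ENNReal.rpow_neg, ENNReal.rpow_neg]
            exact ENNReal.inv_le_inv.2 (ENNReal.rpow_le_rpow hd hs.le)
        _ ≤ ∫⁻ y, edist z y ^ (-s) ∂μ := setLIntegral_le_lintegral _ _
        _ ≤ (n : ENNReal) := hzB
    have h2r : (0:ℝ) < 2 * r := by linarith
    set a : ENNReal := ENNReal.ofReal (2 * r) with ha
    have ha0 : a ≠ 0 := by simp [ha, h2r, hr]
    have haT : a ≠ ⊤ := ENNReal.ofReal_ne_top
    have has0 : a ^ s ≠ 0 := by simp [ENNReal.rpow_eq_zero_iff, ha0, haT]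
    have hasT : a ^ s ≠ ⊤ := by simp [ENNReal.rpow_eq_top_iff, ha0, haT]
    have hmb : μ (closedBall x r) ≤ (n : ENNReal) * a ^ s := by
      rw [ENNReal.rpow_neg] at key
      have := ENNReal.div_le_iff_le_mul (a := μ (closedBall x r)) (b := a ^ s)
        (c := (n : ENNReal)) (Or.inl has0) (Or.inl hasT)
      rw [ENNReal.div_eq_inv_mul, mul_comm] at this
      exact (mul_comm (n : ENNReal) (a ^ s)) ▸ (this.1 key).trans_eq (mul_comm _ _)
    calc μ.restrict B (closedBall x r) ≤ μ (closedBall x r) :=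
          Measure.restrict_le_self _
      _ ≤ (n : ENNReal) * a ^ s := hmb
      _ ≤ ENNReal.ofReal ((n + 1) * 2 ^ s * r ^ s) := by
          have h1 : (ENNReal.ofReal (2 * r)) ^ s = ENNReal.ofReal ((2 * r) ^ s) := by
            rw [← ENNReal.ofReal_rpow_of_pos h2r]
          rw [ha, h1, show ((n : ENNReal)) = ENNReal.ofReal (n : ℝ) by simp,
            ← ENNReal.ofReal_mul (by positivity)]
          apply ENNReal.ofReal_le_ofReal
          rw [Real.mul_rpow (by norm_num) hr.le]
          nlinarith [mul_nonneg (Real.rpow_nonneg (by norm_num : (0:ℝ) ≤ 2) s)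
            (Real.rpow_nonneg hr.le s)]
  · have : μ.restrict B (closedBall x r) = 0 := by
      rw [Measure.restrict_apply measurableSet_closedBall]
      rw [Set.not_nonempty_iff_eq_empty] at hne
      rw [Set.inter_comm] at hne
      simp [hne]
    simp [this]
end

section
/- Let μ be a finite Borel measure on a metric space X such that there exist c > 0 and s > 0 with μ(B(x,r)) ≤ c·r^s for all x ∈ X, r > 0. Then for every t with 0 ≤ t < s, the t-energy I_t(μ) = ∫∫ d(x₁,x₂)^{-t} dμ(x₁)dμ(x₂) is finite. -/
open MeasureTheory Metric

/-- A measure with a Frostman-type ball bound gives zero mass to singletons. -/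
lemma singleton_null {X : Type*} [MetricSpace X]
    [MeasurableSpace X] [BorelSpace X] {s c : ℝ} (hs : 0 < s)
    (μ : Measure X)
    (hball : ∀ (x : X) (r : ℝ), 0 < r → μ (closedBall x r) ≤ ENNReal.ofReal (c * r ^ s)) (x : X) :
    μ {x} = 0 := by
  have hq0 : (0:ℝ) ≤ (1/2:ℝ) ^ s := Real.rpow_nonneg (by norm_num) s
  have hq1 : ((1/2:ℝ)) ^ s < 1 :=
    Real.rpow_lt_one (by norm_num) (by norm_num) hs
  have key : ∀ n : ℕ, μ {x} ≤ ENNReal.ofReal (c * ((1/2:ℝ) ^ s) ^ n) := by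
    intro n
    have hrpos : (0:ℝ) < (1/2:ℝ) ^ n := by positivity
    have hsub : ({x} : Set X) ⊆ closedBall x ((1/2:ℝ) ^ n) := by
      intro y hy
      simp only [Set.mem_singleton_iff] at hy
      subst hy
      exact mem_closedBall_self hrpos.le
    calc μ {x} ≤ μ (closedBall x ((1/2:ℝ) ^ n)) := measure_mono hsub
      _ ≤ ENNReal.ofReal (c * ((1/2:ℝ) ^ n) ^ s) := hball x _ hrpos
      _ = ENNReal.ofReal (c * ((1/2:ℝ) ^ s) ^ n) := by
          rw [← Real.rpow_natCast (1/2:ℝ) n, ← Real.rpow_natCast ((1/2:ℝ) ^ s) n,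
            ← Real.rpow_mul (by norm_num), ← Real.rpow_mul (by norm_num), mul_comm (n:ℝ) s]
  have htend : Filter.Tendsto (fun n : ℕ => ENNReal.ofReal (c * ((1/2:ℝ) ^ s) ^ n))
      Filter.atTop (nhds 0) := by
    have h1 : Filter.Tendsto (fun n : ℕ => c * ((1/2:ℝ) ^ s) ^ n) Filter.atTop (nhds (c * 0)) :=
      (tendsto_pow_atTop_nhds_zero_of_lt_one hq0 hq1).const_mul c
    rw [mul_zero] at h1
    simpa using ENNReal.tendsto_ofReal h1
  have := ge_of_tendsto' htend key
  simpa using this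

theorem stmt_4 {X : Type*} [MetricSpace X] [TopologicalSpace.SeparableSpace X]
    [MeasurableSpace X] [BorelSpace X] {s c : ℝ} (hs : 0 < s) (hc : 0 < c)
    (μ : Measure X) [IsFiniteMeasure μ]
    (hball : ∀ (x : X) (r : ℝ), 0 < r → μ (closedBall x r) ≤ ENNReal.ofReal (c * r ^ s)) :
    ∀ t : ℝ, 0 ≤ t → t < s →
      ∫⁻ x₁, ∫⁻ x₂, (edist x₁ x₂) ^ (-t) ∂μ ∂μ < ⊤ := by
  intro t ht0 hts
  rcases eq_or_lt_of_le ht0 with h0 | ht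
  · -- t = 0
    simp only [← h0, neg_zero, ENNReal.rpow_zero, lintegral_const, one_mul]
    exact ENNReal.mul_lt_top (measure_lt_top μ _) (measure_lt_top μ _)
  -- main case 0 < t < s
  -- radii
  set ρ : ℕ → ℝ := fun n => (1/2:ℝ) ^ n with hρ
  have hρpos : ∀ n, (0:ℝ) < ρ n := fun n => by positivity
  -- the geometric terms
  set g : ℕ → ℝ := fun n => (ρ (n+1)) ^ (-t) * (c * (ρ n) ^ s) with hg
  have hgnonneg : ∀ n, 0 ≤ g n := by
    intro n
    have := (hρpos (n+1)).le
    have := (hρpos n).le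
    positivity
  have hgval : ∀ n, g n = (c * (1/2:ℝ) ^ (-t)) * ((1/2:ℝ) ^ (s - t)) ^ n := by
    intro n
    have h2 : (0:ℝ) ≤ 1/2 := by norm_num
    simp only [hg, hρ]
    rw [← Real.rpow_natCast (1/2:ℝ) (n+1), ← Real.rpow_natCast (1/2:ℝ) n,
      ← Real.rpow_natCast ((1/2:ℝ) ^ (s - t)) n,
      ← Real.rpow_mul h2, ← Real.rpow_mul h2, ← Real.rpow_mul h2]
    have h12 : (0:ℝ) < 1/2 := by norm_num
    calc (1/2:ℝ) ^ ((↑(n+1):ℝ) * (-t)) * (c * (1/2:ℝ) ^ ((n:ℝ) * s))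
        = c * ((1/2:ℝ) ^ ((↑(n+1):ℝ) * (-t)) * (1/2:ℝ) ^ ((n:ℝ) * s)) := by ring
      _ = c * (1/2:ℝ) ^ ((↑(n+1):ℝ) * (-t) + (n:ℝ) * s) := by rw [← Real.rpow_add h12]
      _ = c * (1/2:ℝ) ^ (-t + (s - t) * (n:ℝ)) := by
          congr 1
          push_cast
          ring
      _ = c * ((1/2:ℝ) ^ (-t) * (1/2:ℝ) ^ ((s - t) * (n:ℝ))) := by rw [Real.rpow_add h12]
      _ = c * (1/2:ℝ) ^ (-t) * (1/2:ℝ) ^ ((s - t) * (n:ℝ)) := by ring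
  have hgsummable : Summable g := by
    have hq0 : (0:ℝ) ≤ (1/2:ℝ) ^ (s - t) := Real.rpow_nonneg (by norm_num) _
    have hq1 : ((1/2:ℝ)) ^ (s - t) < 1 :=
      Real.rpow_lt_one (by norm_num) (by norm_num) (by linarith)
    have : Summable (fun n : ℕ => (c * (1/2:ℝ) ^ (-t)) * ((1/2:ℝ) ^ (s - t)) ^ n) :=
      (summable_geometric_of_lt_one hq0 hq1).mul_left _
    exact this.congr (fun n => (hgval n).symm)
  -- the finite constant
  set C : ENNReal := μ Set.univ + ENNReal.ofReal (∑' n, g n) with hC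
  have hCfin : C ≠ ⊤ := by
    simp [hC, ENNReal.add_ne_top, measure_ne_top]
  -- inner integral bound
  have inner_bound : ∀ x : X, ∫⁻ y, edist x y ^ (-t) ∂μ ≤ C := by
    intro x
    have hfmeas' : Measurable (fun y => edist x y ^ (-t)) := by fun_prop
    set f : X → ENNReal := fun y => edist x y ^ (-t) with hf
    have hfmeas : Measurable f := hfmeas'
    -- sets
    set A : Set X := {y | 1 < edist x y} with hA
    have hAmeas : MeasurableSet A := measurable_edist_right measurableSet_Ioi
    set E : ℕ → Set X := fun n =>
      {y | ENNReal.ofReal (ρ (n+1)) < edist x y ∧ edist x y ≤ ENNReal.ofReal (ρ n)} with hE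
    have hEmeas : ∀ n, MeasurableSet (E n) := fun n =>
      measurable_edist_right (measurableSet_Ioc (a := ENNReal.ofReal (ρ (n+1)))
        (b := ENNReal.ofReal (ρ n)))
    -- a.e. pointwise bound
    have hae : ∀ᵐ y ∂μ, f y ≤ A.indicator f y + ∑' n, (E n).indicator f y := by
      have hnull : μ {y | ¬ (f y ≤ A.indicator f y + ∑' n, (E n).indicator f y)} = 0 := by
        refine measure_mono_null ?_ (singleton_null hs μ hball x)
        · intro y hy
          simp only [Set.mem_setOf_eq] at hy
          by_contra hyx
          apply hy
          have hyx' : y ≠ x := fun h => hyx (by simp [h])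
          rcases lt_or_ge 1 (edist x y) with h1 | h1
          · -- y ∈ A
            have hmem : y ∈ A := h1
            have : A.indicator f y = f y := Set.indicator_of_mem hmem f
            rw [this]
            exact le_self_add
          · -- find the annulus
            have hd0 : 0 < dist x y := dist_pos.mpr hyx'.symm
            have hd1 : dist x y ≤ 1 := by
              have := (edist_le_ofReal (by norm_num : (0:ℝ) ≤ 1)).mp (by simpa using h1)
              simpa using this
            have hex : ∃ n : ℕ, ρ (n+1) < dist x y := by
              obtain ⟨n, hn⟩ := exists_pow_lt_of_lt_one hd0 (by norm_num : (1/2:ℝ) < 1)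
              exact ⟨n, lt_of_le_of_lt (by
                simp only [hρ]
                exact pow_le_pow_of_le_one (by norm_num) (by norm_num) (Nat.le_succ n)) hn⟩
            have h₁ : ρ (Nat.find hex + 1) < dist x y := Nat.find_spec hex
            have h₂ : dist x y ≤ ρ (Nat.find hex) := by
              rcases Nat.eq_zero_or_pos (Nat.find hex) with h | h
              · rw [h]; simpa [hρ] using hd1
              · have hm := Nat.find_min hex (Nat.sub_lt h one_pos)
                push_neg at hm
                have heq : Nat.find hex - 1 + 1 = Nat.find hex := by omega
                rwa [heq] at hm
            have hyE : y ∈ E (Nat.find hex) := by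
              constructor
              · rw [edist_dist]
                exact (ENNReal.ofReal_lt_ofReal_iff hd0).mpr h₁
              · exact (edist_le_ofReal (hρpos _).le).mpr h₂
            calc f y = (E (Nat.find hex)).indicator f y := (Set.indicator_of_mem hyE f).symm
              _ ≤ ∑' m, (E m).indicator f y := ENNReal.le_tsum (Nat.find hex)
              _ ≤ A.indicator f y + ∑' m, (E m).indicator f y := le_add_self
      exact hnull
    have step1 : ∫⁻ y, f y ∂μ ≤
        ∫⁻ y, (A.indicator f y + ∑' n, (E n).indicator f y) ∂μ := lintegral_mono_ae hae
    have step2 : ∫⁻ y, (A.indicator f y + ∑' n, (E n).indicator f y) ∂μ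
        = ∫⁻ y in A, f y ∂μ + ∑' n, ∫⁻ y in E n, f y ∂μ := by
      rw [lintegral_add_left (hfmeas.indicator hAmeas),
        lintegral_indicator hAmeas,
        lintegral_tsum (fun n => (hfmeas.indicator (hEmeas n)).aemeasurable)]
      congr 1
      exact tsum_congr fun n => lintegral_indicator (hEmeas n) f
    -- bound on A
    have boundA : ∫⁻ y in A, f y ∂μ ≤ μ Set.univ := by
      calc ∫⁻ y in A, f y ∂μ ≤ ∫⁻ _ in A, 1 ∂μ := by
            apply setLIntegral_mono measurable_const
            intro y hy
            simp only [hA, Set.mem_setOf_eq] at hy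
            have h1 : (1:ENNReal) ≤ edist x y ^ t := by
              calc (1:ENNReal) = 1 ^ t := (ENNReal.one_rpow t).symm
                _ ≤ edist x y ^ t := ENNReal.rpow_le_rpow hy.le ht0
            rw [hf]
            simp only
            rw [ENNReal.rpow_neg]
            exact ENNReal.inv_le_one.mpr h1
        _ = μ A := by simp
        _ ≤ μ Set.univ := measure_mono (Set.subset_univ A)
    -- bound on annuli
    have boundE : ∀ n, ∫⁻ y in E n, f y ∂μ ≤ ENNReal.ofReal (g n) := by
      intro n
      have hb : ∀ y ∈ E n, f y ≤ ENNReal.ofReal ((ρ (n+1)) ^ (-t)) := by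
        intro y hy
        obtain ⟨hy1, _⟩ := hy
        rw [hf]
        simp only
        rw [ENNReal.rpow_neg, ← ENNReal.ofReal_rpow_of_pos (hρpos (n+1)), ENNReal.rpow_neg]
        exact ENNReal.inv_le_inv.mpr (ENNReal.rpow_le_rpow hy1.le ht0)
      have hμE : μ (E n) ≤ ENNReal.ofReal (c * (ρ n) ^ s) := by
        have hsub : E n ⊆ closedBall x (ρ n) := by
          intro y hy
          obtain ⟨_, hy2⟩ := hy
          have := (edist_le_ofReal (hρpos n).le).mp hy2
          simpa [mem_closedBall, dist_comm] using this
        exact le_trans (measure_mono hsub) (hball x (ρ n) (hρpos n))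
      calc ∫⁻ y in E n, f y ∂μ
          ≤ ∫⁻ _ in E n, ENNReal.ofReal ((ρ (n+1)) ^ (-t)) ∂μ :=
            setLIntegral_mono measurable_const hb
        _ = ENNReal.ofReal ((ρ (n+1)) ^ (-t)) * μ (E n) := by simp [mul_comm]
        _ ≤ ENNReal.ofReal ((ρ (n+1)) ^ (-t)) * ENNReal.ofReal (c * (ρ n) ^ s) :=
            mul_le_mul_right hμE _
        _ = ENNReal.ofReal (g n) := by
            rw [← ENNReal.ofReal_mul (Real.rpow_nonneg (hρpos (n+1)).le _)]
    calc ∫⁻ y, f y ∂μ ≤ ∫⁻ y in A, f y ∂μ + ∑' n, ∫⁻ y in E n, f y ∂μ := by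
          rw [← step2]; exact step1
      _ ≤ μ Set.univ + ∑' n, ENNReal.ofReal (g n) :=
          add_le_add boundA (ENNReal.tsum_le_tsum boundE)
      _ = C := by rw [hC, ENNReal.ofReal_tsum_of_nonneg hgnonneg hgsummable]
  calc ∫⁻ x₁, ∫⁻ x₂, (edist x₁ x₂) ^ (-t) ∂μ ∂μ
      ≤ ∫⁻ _, C ∂μ := lintegral_mono fun x => inner_bound x
    _ = C * μ Set.univ := lintegral_const C
    _ < ⊤ := ENNReal.mul_lt_top hCfin.lt_top (measure_lt_top μ _)
end

section
/- Let ρ be a finite Borel measure on a separable metric space Y, and suppose ν is a Borel measure on Y that is outer regular by open sets and satisfies liminf_{r→0} ν(B(y,r))/r^κ > 0 for every y ∈ Y. If ρ satisfies ρ[y : liminf_{r→0} ρ(B(y,r))/r^κ = ∞] = 0, then ρ is absolutely continuous with respect to ν. -/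
open MeasureTheory Metric Filter
open scoped ENNReal NNReal

/-- Key covering estimate: if on a set `A` the `ρ`-density (w.r.t. `r ^ κ`) has liminf at most
`M`, the `ν`-measure of small balls is at least `(m+1)⁻¹ * r ^ κ`, and `ν A = 0`, then
`ρ A = 0`. -/
lemma stmt_12_aux {Y : Type*} [MetricSpace Y] [TopologicalSpace.SeparableSpace Y]
    [MeasurableSpace Y] [BorelSpace Y] {κ : ℝ} (hκ : 0 < κ)
    (ρ ν : Measure Y) [ν.OuterRegular] (M m : ℕ) (A : Set Y)
    (hA1 : ∀ y ∈ A, liminf (fun r : ℝ =>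
      ρ (closedBall y r) / ENNReal.ofReal (r ^ κ)) (nhdsWithin 0 (Set.Ioi 0)) ≤ M)
    (hA2 : ∀ y ∈ A, ∀ r : ℝ, 0 < r → r ≤ 1 / (m + 1) →
      ENNReal.ofReal (r ^ κ) ≤ (m + 1) * ν (closedBall y r))
    (hν0 : ν A = 0) : ρ A = 0 := by
  set C : ℝ≥0∞ := ((M : ℝ≥0∞) + 1) * ENNReal.ofReal (5 ^ κ) * ((m : ℝ≥0∞) + 1) with hC
  have h5 : (0 : ℝ) < 5 ^ κ := Real.rpow_pos_of_pos (by norm_num) κ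
  have hC0 : C ≠ 0 :=
    mul_ne_zero (mul_ne_zero (by simp) (ENNReal.ofReal_pos.2 h5).ne') (by simp)
  have hCtop : C ≠ ⊤ := by
    simp only [hC]
    exact ENNReal.mul_ne_top (ENNReal.mul_ne_top (by simp) ENNReal.ofReal_ne_top) (by simp)
  -- main estimate: for every positive `ε`, `ρ A ≤ C * ε`.
  have key : ∀ ε : ℝ≥0∞, 0 < ε → ρ A ≤ C * ε := by
    intro ε hε
    obtain ⟨U, hAU, hUopen, hUν⟩ := A.exists_isOpen_lt_of_lt ε (by rw [hν0]; exact hε)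
    -- family of candidate balls
    set fam : Set (Y × ℝ) := {p | p.1 ∈ A ∧ 0 < p.2 ∧ p.2 ≤ 1 / (m + 1) ∧
      closedBall p.1 p.2 ⊆ U ∧
      ρ (closedBall p.1 (5 * p.2)) ≤ ((M : ℝ≥0∞) + 1) * ENNReal.ofReal ((5 * p.2) ^ κ)}
      with hfam
    obtain ⟨u, hut, hud, hucov⟩ :=
      Vitali.exists_disjoint_subfamily_covering_enlargement_closedBall fam Prod.fst Prod.snd
        (1 / (m + 1)) (fun p hp => hp.2.2.1) 5 (by norm_num)
    -- the enlarged balls cover `A`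
    have hcover : A ⊆ ⋃ b ∈ u, closedBall b.1 (5 * b.2) := by
      intro y hy
      obtain ⟨δ, hδ0, hδU⟩ := Metric.isOpen_iff.1 hUopen y (hAU hy)
      have hδ2 : closedBall y (δ / 2) ⊆ U :=
        (closedBall_subset_ball (by linarith)).trans hδU
      set η : ℝ := min (δ / 2) (1 / (m + 1)) with hη
      have hη0 : 0 < η := lt_min (by linarith) (by positivity)
      have hlt : liminf (fun r : ℝ =>
          ρ (closedBall y r) / ENNReal.ofReal (r ^ κ)) (nhdsWithin 0 (Set.Ioi 0))
          < (M : ℝ≥0∞) + 1 :=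
        lt_of_le_of_lt (hA1 y hy) (ENNReal.lt_add_right (ENNReal.natCast_ne_top M) one_ne_zero)
      have hfreq := frequently_lt_of_liminf_lt (by isBoundedDefault) hlt
      obtain ⟨t, htd, ht⟩ :=
        (hfreq.and_eventually (eventually_of_mem
          (Ioc_mem_nhdsGT_of_mem (Set.mem_Ico.2 ⟨le_refl (0:ℝ), hη0⟩)) (fun x hx => hx))).exists
      obtain ⟨ht0, htη⟩ := ht
      have htκ : (0 : ℝ) < t ^ κ := Real.rpow_pos_of_pos ht0 κ
      have hρt : ρ (closedBall y t) ≤ ((M : ℝ≥0∞) + 1) * ENNReal.ofReal (t ^ κ) := by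
        have := (ENNReal.div_lt_iff (Or.inl (ENNReal.ofReal_pos.2 htκ).ne')
          (Or.inl ENNReal.ofReal_ne_top)).1 htd
        exact this.le
      have hmem : (y, t / 5) ∈ fam := by
        refine ⟨hy, by linarith, ?_, ?_, ?_⟩
        · have : t / 5 ≤ t := by linarith
          exact this.trans (htη.trans (min_le_right _ _))
        · refine (closedBall_subset_closedBall ?_).trans hδ2
          have : t ≤ δ / 2 := htη.trans (min_le_left _ _)
          linarith
        · have h5t : 5 * (t / 5) = t := by ring
          rw [h5t]
          exact hρt
      obtain ⟨b, hbu, hb⟩ := hucov _ hmem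
      exact Set.mem_biUnion hbu (hb (mem_closedBall_self (by linarith)))
    have hucount : u.Countable := by
      apply hud.countable_of_nonempty_interior
      intro p hp
      have hp0 : 0 < p.2 := (hut hp).2.1
      exact ⟨p.1, ball_subset_interior_closedBall (mem_ball_self hp0)⟩
    have hterm : ∀ b ∈ u, ρ (closedBall b.1 (5 * b.2)) ≤ C * ν (closedBall b.1 b.2) := by
      intro b hb
      obtain ⟨hbA, hb0, hbm, hbU, hbρ⟩ := hut hb
      have h1 : ENNReal.ofReal ((5 * b.2) ^ κ)
          = ENNReal.ofReal (5 ^ κ) * ENNReal.ofReal (b.2 ^ κ) := by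
        rw [Real.mul_rpow (by norm_num) hb0.le, ENNReal.ofReal_mul h5.le]
      calc ρ (closedBall b.1 (5 * b.2))
          ≤ ((M : ℝ≥0∞) + 1) * ENNReal.ofReal ((5 * b.2) ^ κ) := hbρ
        _ = ((M : ℝ≥0∞) + 1) * ENNReal.ofReal (5 ^ κ) * ENNReal.ofReal (b.2 ^ κ) := by
            rw [h1, mul_assoc]
        _ ≤ ((M : ℝ≥0∞) + 1) * ENNReal.ofReal (5 ^ κ)
            * (((m : ℝ≥0∞) + 1) * ν (closedBall b.1 b.2)) :=
            mul_le_mul_right (hA2 b.1 hbA b.2 hb0 hbm) _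
        _ = C * ν (closedBall b.1 b.2) := by rw [hC]; ring
    calc ρ A ≤ ρ (⋃ b ∈ u, closedBall b.1 (5 * b.2)) := measure_mono hcover
      _ ≤ ∑' b : u, ρ (closedBall (b : Y × ℝ).1 (5 * (b : Y × ℝ).2)) :=
          measure_biUnion_le ρ hucount _
      _ ≤ ∑' b : u, C * ν (closedBall (b : Y × ℝ).1 (b : Y × ℝ).2) :=
          ENNReal.tsum_le_tsum fun b => hterm b b.prop
      _ = C * ∑' b : u, ν (closedBall (b : Y × ℝ).1 (b : Y × ℝ).2) := ENNReal.tsum_mul_left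
      _ = C * ν (⋃ b ∈ u, closedBall b.1 b.2) := by
          rw [measure_biUnion hucount hud fun b _ => measurableSet_closedBall]
      _ ≤ C * ν U := mul_le_mul_right (measure_mono (Set.iUnion₂_subset
          fun b hb => (hut hb).2.2.2.1)) C
      _ ≤ C * ε := mul_le_mul_right hUν.le C
  -- conclude
  refine le_antisymm ?_ (zero_le)
  refine ENNReal.le_of_forall_pos_le_add fun ε hε _ => ?_
  have hεC : 0 < (ε : ℝ≥0∞) / C := ENNReal.div_pos (by exact_mod_cast hε.ne') hCtop
  calc ρ A ≤ C * ((ε : ℝ≥0∞) / C) := key _ hεC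
    _ = (ε : ℝ≥0∞) := ENNReal.mul_div_cancel hC0 hCtop
    _ ≤ 0 + ε := by simp

theorem stmt_12 {Y : Type*} [MetricSpace Y] [TopologicalSpace.SeparableSpace Y]
    [MeasurableSpace Y] [BorelSpace Y] {κ : ℝ} (hκ : 0 < κ)
    (ρ : Measure Y) [IsFiniteMeasure ρ]
    (ν : Measure Y) [ν.OuterRegular]
    (hν : ∀ y : Y, 0 < liminf (fun r : ℝ =>
      ν (closedBall y r) / ENNReal.ofReal (r ^ κ)) (nhdsWithin 0 (Set.Ioi 0)))
    (hρ : ρ {y | liminf (fun r : ℝ =>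
      ρ (closedBall y r) / ENNReal.ofReal (r ^ κ)) (nhdsWithin 0 (Set.Ioi 0)) = ⊤} = 0) :
    ρ ≪ ν := by
  refine Measure.AbsolutelyContinuous.mk fun s hs hsν => ?_
  set L : Y → ℝ≥0∞ := fun y => liminf (fun r : ℝ =>
    ρ (closedBall y r) / ENNReal.ofReal (r ^ κ)) (nhdsWithin 0 (Set.Ioi 0)) with hL
  set A : ℕ → ℕ → Set Y := fun M m => {y | y ∈ s ∧ L y ≤ M ∧ ∀ r : ℝ, 0 < r →
    r ≤ 1 / (m + 1) → ENNReal.ofReal (r ^ κ) ≤ (m + 1) * ν (closedBall y r)} with hA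
  have hcover : s ⊆ {y | L y = ⊤} ∪ ⋃ p : ℕ × ℕ, A p.1 p.2 := by
    intro y hy
    by_cases hLy : L y = ⊤
    · exact Or.inl hLy
    right
    obtain ⟨M, hM⟩ := ENNReal.exists_nat_gt hLy
    -- find `m` using the positive liminf for `ν`
    obtain ⟨c, hc0, hclim⟩ := exists_between (hν y)
    have hev := eventually_lt_of_lt_liminf hclim (by isBoundedDefault)
    obtain ⟨δ, hδ0, hδ⟩ := mem_nhdsGT_iff_exists_Ioc_subset.1 hev
    obtain ⟨n1, hn1⟩ := ENNReal.exists_inv_nat_lt hc0.ne'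
    obtain ⟨n2, hn2⟩ := exists_nat_one_div_lt (show (0 : ℝ) < δ from hδ0)
    set m := max n1 n2 with hm
    refine Set.mem_iUnion.2 ⟨(M, m), hy, hM.le, fun r hr0 hrm => ?_⟩
    have hrδ : r ∈ Set.Ioc (0 : ℝ) δ := by
      refine ⟨hr0, hrm.trans (le_of_lt ?_)⟩
      calc (1 : ℝ) / (m + 1) ≤ 1 / (n2 + 1) := by
            apply one_div_le_one_div_of_le (by positivity)
            have : (n2 : ℝ) ≤ m := by exact_mod_cast le_max_right n1 n2
            linarith
        _ < δ := hn2
    have hcr : c < ν (closedBall y r) / ENNReal.ofReal (r ^ κ) := hδ hrδ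
    have hrκ : (0 : ℝ) < r ^ κ := Real.rpow_pos_of_pos hr0 κ
    have hνr : c * ENNReal.ofReal (r ^ κ) ≤ ν (closedBall y r) := by
      rw [← ENNReal.le_div_iff_mul_le
        (Or.inl (ENNReal.ofReal_pos.2 hrκ).ne') (Or.inl ENNReal.ofReal_ne_top)]
      exact hcr.le
    have hminv : ((m : ℝ≥0∞) + 1)⁻¹ ≤ c := by
      calc ((m : ℝ≥0∞) + 1)⁻¹ ≤ ((n1 : ℝ≥0∞))⁻¹ := by
            apply ENNReal.inv_le_inv.2
            have : (n1 : ℝ≥0∞) ≤ m := by exact_mod_cast le_max_left n1 n2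
            exact this.trans (le_add_of_nonneg_right (zero_le))
        _ ≤ c := hn1.le
    have hm1 : ((m : ℝ≥0∞) + 1) ≠ 0 := by simp
    have hm2 : ((m : ℝ≥0∞) + 1) ≠ ⊤ := by simp
    calc ENNReal.ofReal (r ^ κ)
        = ((m : ℝ≥0∞) + 1) * (((m : ℝ≥0∞) + 1)⁻¹ * ENNReal.ofReal (r ^ κ)) := by
          rw [← mul_assoc, ENNReal.mul_inv_cancel hm1 hm2, one_mul]
      _ ≤ ((m : ℝ≥0∞) + 1) * (c * ENNReal.ofReal (r ^ κ)) :=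
          mul_le_mul_right (mul_le_mul_left hminv _) _
      _ ≤ ((m : ℝ≥0∞) + 1) * ν (closedBall y r) := mul_le_mul_right hνr _
  have hAnull : ∀ p : ℕ × ℕ, ρ (A p.1 p.2) = 0 := by
    intro p
    apply stmt_12_aux hκ ρ ν p.1 p.2
    · exact fun y hy => hy.2.1
    · exact fun y hy => hy.2.2
    · exact measure_mono_null (fun y hy => hy.1) hsν
  refine le_antisymm ?_ (zero_le)
  calc ρ s ≤ ρ ({y | L y = ⊤} ∪ ⋃ p : ℕ × ℕ, A p.1 p.2) := measure_mono hcover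
    _ ≤ ρ {y | L y = ⊤} + ρ (⋃ p : ℕ × ℕ, A p.1 p.2) := measure_union_le _ _
    _ ≤ 0 + ∑' p : ℕ × ℕ, ρ (A p.1 p.2) := by
        exact add_le_add hρ.le (measure_iUnion_le _)
    _ = 0 := by simp [hAnull]
end

section
/- Let ρ and ν be Borel measures on a separable metric space Y with ν outer regular by open sets. Suppose M > 0 and P ⊂ Y is the set of points y with liminf_{r→0} ρ(B(y,r))/r^κ < M and liminf_{r→0} ν(B(y,r))/r^κ > 1/M. Then for every set A ⊂ Y, ρ(A ∩ P) ≤ 5^κ M² ν(U) for every open set U ⊇ A. In particular ρ(A ∩ P) ≤ 5^κ M² ν(A) when ν is outer regular. -/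
open MeasureTheory Metric Filter

theorem stmt_18 {Y : Type*} [MetricSpace Y] [TopologicalSpace.SeparableSpace Y]
    [MeasurableSpace Y] [BorelSpace Y] {κ M : ℝ} (hκ : 0 < κ) (hM : 0 < M)
    (ρ ν : Measure Y) [ν.OuterRegular]
    (P : Set Y)
    (hP : P = {y | liminf (fun r : ℝ =>
        ρ (closedBall y r) / ENNReal.ofReal (r ^ κ)) (nhdsWithin 0 (Set.Ioi 0))
        < ENNReal.ofReal M ∧
      ENNReal.ofReal M⁻¹ < liminf (fun r : ℝ =>
        ν (closedBall y r) / ENNReal.ofReal (r ^ κ)) (nhdsWithin 0 (Set.Ioi 0))}) :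
    (∀ (A U : Set Y), IsOpen U → A ⊆ U →
      ρ (A ∩ P) ≤ ENNReal.ofReal (5 ^ κ * M ^ 2) * ν U) ∧
    (∀ A : Set Y, MeasurableSet A →
      ρ (A ∩ P) ≤ ENNReal.ofReal (5 ^ κ * M ^ 2) * ν A) := by
  have hc0 : (0:ℝ) < 5 ^ κ * M ^ 2 := by positivity
  have key : ∀ (A U : Set Y), IsOpen U → A ⊆ U →
      ρ (A ∩ P) ≤ ENNReal.ofReal (5 ^ κ * M ^ 2) * ν U := by
    intro A U hU hAU
    -- selection of good radii
    have hsel : ∀ y ∈ A ∩ P, ∃ r : ℝ, 0 < r ∧ r ≤ 1 ∧ closedBall y (5 * r) ⊆ U ∧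
        ρ (closedBall y (5 * r)) ≤ ENNReal.ofReal (M * (5 * r) ^ κ) ∧
        ENNReal.ofReal (r ^ κ / M) ≤ ν (closedBall y r) := by
      rintro y ⟨hyA, hyP⟩
      rw [hP] at hyP
      obtain ⟨h1, h2⟩ := hyP
      have hfreq : ∃ᶠ s in nhdsWithin 0 (Set.Ioi 0),
          ρ (closedBall y s) / ENNReal.ofReal (s ^ κ) < ENNReal.ofReal M :=
        frequently_lt_of_liminf_lt (by isBoundedDefault) h1
      have htend : Tendsto (fun s : ℝ => s / 5) (nhdsWithin 0 (Set.Ioi 0))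
          (nhdsWithin 0 (Set.Ioi 0)) := by
        rw [tendsto_nhdsWithin_iff]
        constructor
        · have h0 : Tendsto (fun s : ℝ => s / 5) (nhds 0) (nhds (0 / 5)) :=
            (tendsto_id (x := nhds (0:ℝ))).div_const 5
          simpa using h0.mono_left nhdsWithin_le_nhds
        · filter_upwards [self_mem_nhdsWithin] with s hs
          exact div_pos (Set.mem_Ioi.mp hs) (by norm_num)
      have hev1 : ∀ᶠ s in nhdsWithin 0 (Set.Ioi 0),
          ENNReal.ofReal M⁻¹ < ν (closedBall y (s / 5)) / ENNReal.ofReal ((s / 5) ^ κ) :=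
        htend.eventually (eventually_lt_of_lt_liminf h2)
      obtain ⟨ε, hε, hεU⟩ : ∃ ε > 0, ball y ε ⊆ U :=
        Metric.isOpen_iff.1 hU y (hAU hyA)
      have hev2 : ∀ᶠ s in nhdsWithin 0 (Set.Ioi 0), s ∈ Set.Ioo 0 (min ε 5) :=
        Ioo_mem_nhdsGT_of_mem ⟨le_refl 0, lt_min hε (by norm_num)⟩
      obtain ⟨s, hs1, hs2, hs3⟩ := (hfreq.and_eventually (hev1.and hev2)).exists
      obtain ⟨hs0, hsm⟩ := hs3
      set r := s / 5 with hr
      have hr0 : 0 < r := by positivity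
      refine ⟨r, hr0, ?_, ?_, ?_, ?_⟩
      · rw [hr]; nlinarith [lt_of_lt_of_le hsm (min_le_right ε 5)]
      · have h5r : 5 * r = s := by rw [hr]; ring
        rw [h5r]
        refine subset_trans ?_ hεU
        intro z hz
        have : dist z y ≤ s := hz
        exact lt_of_le_of_lt this (lt_of_lt_of_le hsm (min_le_left ε 5))
      · have h5r : 5 * r = s := by rw [hr]; ring
        rw [h5r]
        have hpow : (0:ℝ) < s ^ κ := Real.rpow_pos_of_pos hs0 κ
        have := (ENNReal.div_lt_iff (Or.inl (by simp [ENNReal.ofReal_pos.2 hpow, ne_of_gt]))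
          (Or.inl ENNReal.ofReal_ne_top)).1 hs1
        rw [← ENNReal.ofReal_mul hM.le] at this
        exact this.le
      · have hpow : (0:ℝ) < r ^ κ := Real.rpow_pos_of_pos hr0 κ
        have := (ENNReal.lt_div_iff_mul_lt
          (Or.inl (by simp [ENNReal.ofReal_pos.2 hpow, ne_of_gt]))
          (Or.inl ENNReal.ofReal_ne_top)).1 hs2
        rw [← ENNReal.ofReal_mul (by positivity : (0:ℝ) ≤ M⁻¹)] at this
        calc ENNReal.ofReal (r ^ κ / M) = ENNReal.ofReal (M⁻¹ * r ^ κ) := by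
              rw [div_eq_inv_mul]
          _ ≤ ν (closedBall y r) := this.le
    choose! r hr0 hr1 hrU hrρ hrν using hsel
    obtain ⟨u, uT, u_disj, hu⟩ :=
      Vitali.exists_disjoint_subfamily_covering_enlargement_closedBall (A ∩ P) id r 1
        (fun a ha => hr1 a ha) 5 (by norm_num)
    simp only [id_eq] at u_disj hu
    have u_count : u.Countable := by
      refine u_disj.countable_of_nonempty_interior fun b hb => ?_
      exact ⟨b, ball_subset_interior_closedBall (mem_ball_self (hr0 b (uT hb)))⟩
    have cover : A ∩ P ⊆ ⋃ b ∈ u, closedBall b (5 * r b) := by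
      intro a ha
      obtain ⟨b, hb, hsub⟩ := hu a ha
      exact Set.mem_biUnion hb (hsub (mem_closedBall_self (hr0 a ha).le))
    calc ρ (A ∩ P) ≤ ρ (⋃ b ∈ u, closedBall b (5 * r b)) := measure_mono cover
      _ ≤ ∑' b : u, ρ (closedBall b (5 * r b)) := measure_biUnion_le ρ u_count _
      _ ≤ ∑' b : u, ENNReal.ofReal (5 ^ κ * M ^ 2) * ν (closedBall b (r b)) := by
          refine ENNReal.tsum_le_tsum fun b => ?_
          have hb := uT b.2
          have hrb := hr0 b hb
          calc ρ (closedBall b (5 * r b)) ≤ ENNReal.ofReal (M * (5 * r (b:Y)) ^ κ) := hrρ b hb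
            _ = ENNReal.ofReal (5 ^ κ * M ^ 2) * ENNReal.ofReal ((r (b:Y)) ^ κ / M) := by
                rw [← ENNReal.ofReal_mul hc0.le]
                congr 1
                rw [Real.mul_rpow (by norm_num) hrb.le]
                field_simp
            _ ≤ ENNReal.ofReal (5 ^ κ * M ^ 2) * ν (closedBall b (r b)) :=
                mul_le_mul_right (hrν b hb) _
      _ = ENNReal.ofReal (5 ^ κ * M ^ 2) * ∑' b : u, ν (closedBall b (r b)) :=
          ENNReal.tsum_mul_left
      _ = ENNReal.ofReal (5 ^ κ * M ^ 2) * ν (⋃ b ∈ u, closedBall b (r b)) := by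
          rw [measure_biUnion u_count u_disj fun b hb => measurableSet_closedBall]
      _ ≤ ENNReal.ofReal (5 ^ κ * M ^ 2) * ν U := by
          refine mul_le_mul_right (measure_mono ?_) _
          refine Set.iUnion₂_subset fun b hb => ?_
          refine subset_trans (closedBall_subset_closedBall ?_) (hrU b (uT hb))
          nlinarith [hr0 b (uT hb)]
  refine ⟨key, fun A _ => ?_⟩
  by_contra hcon
  push_neg at hcon
  set c := ENNReal.ofReal (5 ^ κ * M ^ 2) with hc
  have hcne : c ≠ 0 := by simp [hc, ENNReal.ofReal_pos.2 hc0, ne_of_gt]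
  have hctop : c ≠ ⊤ := ENNReal.ofReal_ne_top
  have hνA : ν A < ρ (A ∩ P) / c := by
    rw [ENNReal.lt_div_iff_mul_lt (Or.inl hcne) (Or.inl hctop), mul_comm]
    exact hcon
  obtain ⟨U, hAU, hUo, hUlt⟩ := Set.exists_isOpen_lt_of_lt A _ hνA
  have : ρ (A ∩ P) ≤ c * ν U := key A U hUo hAU
  have h2 : c * ν U < c * (ρ (A ∩ P) / c) :=
    ENNReal.mul_lt_mul_right hcne hctop hUlt
  rw [ENNReal.mul_div_cancel hcne hctop] at h2
  exact absurd (lt_of_le_of_lt this h2) (lt_irrefl _)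
end
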